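/- Let f, g be holomorphic on an open set U ⊆ ℂⁿ, let F(z) = f(z)·conj(g(z)) and V = F⁻¹(0) = f⁻¹(0) ∪ g⁻¹(0). Then Sing F ∩ V = {z : f(z) = 0 and g(z) = 0} ∪ {z : f(z) = 0 and ∇f(z) = 0} ∪ {z : g(z) = 0 and ∇g(z) = 0}; that is, within V the singular set of F consists exactly of the common zero set {f = g = 0} together with the singular points of f lying on {f = 0} and the singular points of g lying on {g = 0}. (Lemma 2.4(2).) -/

import Mathlib

open Complex Filter Function Metric

noncomputable section

/-- `ℂⁿ` with its Euclidean (Hermitian) norm. -/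
abbrev Cn (n : ℕ) := EuclideanSpace ℂ (Fin n)

/-- Complex gradient `∇f(z) = (∂f/∂z₁,…,∂f/∂zₙ)(z)` of a holomorphic function `f`. -/
def gradC {n : ℕ} (f : Cn n → ℂ) (z : Cn n) : Cn n :=
  WithLp.toLp 2 (fun k => fderiv ℂ f z (EuclideanSpace.single k 1))

/-! At a point of `V` one factor of `F = f·ḡ` vanishes, so the real derivative of `F` there is
`ḡ(z)·df_z` or `f(z)·conj ∘ dg_z`; if the other factor is nonzero, this is surjective exactly
when the ℂ-linear functional `df_z` (resp. `dg_z`) is nonzero, i.e. when `∇f(z) ≠ 0`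
(resp. `∇g(z) ≠ 0`). If both factors vanish, the derivative is zero. -/

open ComplexConjugate

theorem gradC_eq_zero_iff {n : ℕ} (f : Cn n → ℂ) (z : Cn n) :
    gradC f z = 0 ↔ fderiv ℂ f z = 0 := by
  rw [gradC, ← WithLp.toLp_zero, (WithLp.toLp_injective 2).eq_iff, funext_iff]
  refine ⟨fun h => ContinuousLinearMap.coe_injective ?_, fun h k => by simp [h]⟩
  exact (EuclideanSpace.basisFun (Fin n) ℂ).toBasis.ext fun k => by simpa using h k

section
variable {E : Type*} [NormedAddCommGroup E] [NormedSpace ℂ E] {f g : E → ℂ} {z : E}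

theorem ContinuousLinearMap.surjective_iff_ne_zero (L : E →L[ℂ] ℂ) :
    Surjective L ↔ L ≠ 0 := by
  rw [← L.coe_coe, LinearMap.surjective_iff_ne_zero, Ne, ← ContinuousLinearMap.toLinearMap_zero,
    ContinuousLinearMap.coe_inj]

theorem fderiv_mul_conj_apply (hf : DifferentiableAt ℂ f z) (hg : DifferentiableAt ℂ g z)
    (v : E) :
    fderiv ℝ (fun w => f w * conj (g w)) z v =
      f z * conj (fderiv ℂ g z v) + conj (g z) * fderiv ℂ f z v := by
  have hconj : HasFDerivAt (fun w => conj (g w))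
      (conjCLE.toContinuousLinearMap.comp ((fderiv ℂ g z).restrictScalars ℝ)) z :=
    conjCLE.toContinuousLinearMap.hasFDerivAt.comp z (hg.hasFDerivAt.restrictScalars ℝ)
  have hprod : HasFDerivAt (fun w => f w * conj (g w)) _ z :=
    (hf.hasFDerivAt.restrictScalars ℝ).mul hconj
  rw [hprod.fderiv]
  simp

theorem not_surjective_fderiv_mul_conj_of_eq_zero (hf : DifferentiableAt ℂ f z)
    (hg : DifferentiableAt ℂ g z) (hf0 : f z = 0) (hg0 : g z = 0) :
    ¬ Surjective (fderiv ℝ (fun w => f w * conj (g w)) z) := by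
  intro hsurj
  obtain ⟨v, hv⟩ := hsurj 1
  simp [fderiv_mul_conj_apply hf hg, hf0, hg0] at hv

theorem surjective_fderiv_mul_conj_iff_of_left_eq_zero (hf : DifferentiableAt ℂ f z)
    (hg : DifferentiableAt ℂ g z) (hf0 : f z = 0) (hg0 : g z ≠ 0) :
    Surjective (fderiv ℝ (fun w => f w * conj (g w)) z) ↔ fderiv ℂ f z ≠ 0 := by
  have hD : ⇑(fderiv ℝ (fun w => f w * conj (g w)) z) = (conj (g z) * ·) ∘ fderiv ℂ f z := by
    funext v
    simp [fderiv_mul_conj_apply hf hg, hf0]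
  rw [hD, Surjective.of_comp_iff' (mulLeft_bijective₀ _ (by simpa)),
    ContinuousLinearMap.surjective_iff_ne_zero]

theorem surjective_fderiv_mul_conj_iff_of_right_eq_zero (hf : DifferentiableAt ℂ f z)
    (hg : DifferentiableAt ℂ g z) (hf0 : f z ≠ 0) (hg0 : g z = 0) :
    Surjective (fderiv ℝ (fun w => f w * conj (g w)) z) ↔ fderiv ℂ g z ≠ 0 := by
  have hD : ⇑(fderiv ℝ (fun w => f w * conj (g w)) z) = (f z * ·) ∘ conj ∘ fderiv ℂ g z := by
    funext v
    simp [fderiv_mul_conj_apply hf hg, hg0]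
  rw [hD, Surjective.of_comp_iff' (mulLeft_bijective₀ _ hf0),
    Surjective.of_comp_iff' (Involutive.bijective conj_conj),
    ContinuousLinearMap.surjective_iff_ne_zero]

end

/-- **Lemma 2.4(2).**  For `f, g` holomorphic on an open `U ⊆ ℂⁿ`, `F = f·ḡ` and
`V = F⁻¹(0) = f⁻¹(0) ∪ g⁻¹(0)`, one has
`Sing F ∩ V = {f = g = 0} ∪ (Sing f ∩ {f = 0}) ∪ (Sing g ∩ {g = 0})`:
for `z ∈ U` lying in `V`, the derivative `fderiv ℝ F z` is not surjective exactly when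
`f(z) = g(z) = 0`, or `f(z) = 0` and `∇f(z) = 0`, or `g(z) = 0` and `∇g(z) = 0`. -/
theorem sing_fgbar_on_V
    {n : ℕ} (U : Set (Cn n)) (hU : IsOpen U)
    (f g : Cn n → ℂ) (hf : DifferentiableOn ℂ f U) (hg : DifferentiableOn ℂ g U)
    (F : Cn n → ℂ) (hF : ∀ z, F z = f z * starRingEnd ℂ (g z))
    (z : Cn n) (hz : z ∈ U) (hzV : F z = 0) :
    ¬ Surjective ⇑(fderiv ℝ F z) ↔
      (f z = 0 ∧ g z = 0) ∨ (f z = 0 ∧ gradC f z = 0) ∨ (g z = 0 ∧ gradC g z = 0) := by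
  obtain rfl : F = fun w => f w * conj (g w) := funext hF
  have hfz : DifferentiableAt ℂ f z := (hf z hz).differentiableAt (hU.mem_nhds hz)
  have hgz : DifferentiableAt ℂ g z := (hg z hz).differentiableAt (hU.mem_nhds hz)
  rw [gradC_eq_zero_iff, gradC_eq_zero_iff]
  by_cases hf0 : f z = 0 <;> by_cases hg0 : g z = 0
  · simp [hf0, hg0, not_surjective_fderiv_mul_conj_of_eq_zero hfz hgz hf0 hg0]
  · simp [hf0, hg0, surjective_fderiv_mul_conj_iff_of_left_eq_zero hfz hgz hf0 hg0]
  · simp [hf0, hg0, surjective_fderiv_mul_conj_iff_of_right_eq_zero hfz hgz hf0 hg0]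
  · exact absurd hzV (mul_ne_zero hf0 (by simpa using hg0))
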